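/- In the score-threshold routing model with network cost scaling κ > 0, define the state-dependent cost C_κ(τ) = ∫_τ^∞ cE(s) f(s) ds + ∫_{−∞}^τ (cE(s) + κ·ΔC(s)) f(s) ds. Then for every τ with f(τ) > 0 and ΔC(τ) ≠ 0, the state-dependent frontier slope satisfies Q′(τ) / C_κ′(τ) = ρ(τ) / κ; in particular, a smaller κ (a better network state) steepens the attainable quality–cost slope at the same threshold. -/

import Mathlib

/-!
Both `Q` and `C_κ` have the form `τ ↦ ∫_τ^∞ g + ∫_{-∞}^τ h`, whose derivative at `τ` is
`h τ - g τ` by the fundamental theorem of calculus. Hence `Q'(τ) = ΔQ(τ) f(τ)` and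
`C_κ'(τ) = κ ΔC(τ) f(τ)`, and the density factor `f(τ) ≠ 0` cancels in the ratio.
-/

open MeasureTheory Set

section ThresholdIntegral

variable {E : Type*} [NormedAddCommGroup E] [NormedSpace ℝ E] [CompleteSpace E]
  {g h : ℝ → E} {τ : ℝ}

theorem hasDerivAt_integral_Iio (hIg : Integrable g) (hg : ContinuousAt g τ) :
    HasDerivAt (fun t => ∫ s in Iio t, g s) (g τ) τ := by
  have hsplit : (fun t => ∫ s in Iio t, g s)
      = fun t => (∫ s in Iic (0 : ℝ), g s) + ∫ s in (0 : ℝ)..t, g s := by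
    funext t
    rw [← integral_Iic_eq_integral_Iio,
      ← intervalIntegral.integral_Iic_sub_Iic hIg.integrableOn hIg.integrableOn,
      add_sub_cancel]
  rw [hsplit]
  exact (intervalIntegral.integral_hasDerivAt_right hIg.intervalIntegrable
    hIg.aestronglyMeasurable.stronglyMeasurableAtFilter hg).const_add _

theorem hasDerivAt_integral_Ioi (hIg : Integrable g) (hg : ContinuousAt g τ) :
    HasDerivAt (fun t => ∫ s in Ioi t, g s) (-g τ) τ := by
  have hcompl : (fun t => ∫ s in Ioi t, g s) = fun t => (∫ s, g s) - ∫ s in Iio t, g s := by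
    funext t
    rw [← integral_Iic_eq_integral_Iio, ← compl_Iic, setIntegral_compl measurableSet_Iic hIg]
  rw [hcompl]
  exact (hasDerivAt_integral_Iio hIg hg).const_sub _

theorem deriv_integral_Ioi_add_integral_Iio (hIg : Integrable g) (hIh : Integrable h)
    (hg : ContinuousAt g τ) (hh : ContinuousAt h τ) :
    deriv (fun t => (∫ s in Ioi t, g s) + ∫ s in Iio t, h s) τ = h τ - g τ :=
  ((hasDerivAt_integral_Ioi hIg hg).add (hasDerivAt_integral_Iio hIh hh)).deriv.trans
    (neg_add_eq_sub _ _)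

end ThresholdIntegral

theorem stmt_10_general (f qE qC cE cC : ℝ → ℝ) (κ : ℝ)
    (hf : Continuous f)
    (hqE : Continuous qE) (hqC : Continuous qC)
    (hcE : Continuous cE) (hcC : Continuous cC)
    (hIqE : Integrable (fun s => qE s * f s))
    (hIqC : Integrable (fun s => qC s * f s))
    (hIcE : Integrable (fun s => cE s * f s))
    (hIΔC : Integrable (fun s => (cC s - cE s) * f s))
    (τ : ℝ) (hfτ : 0 < f τ) :
    deriv (fun τ => (∫ s in Ioi τ, qE s * f s) + ∫ s in Iio τ, qC s * f s) τ
      / deriv (fun τ => (∫ s in Ioi τ, cE s * f s)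
          + ∫ s in Iio τ, (cE s + κ * (cC s - cE s)) * f s) τ
    = ((qC τ - qE τ) / (cC τ - cE τ)) / κ := by
  have hIcost : Integrable (fun s => (cE s + κ * (cC s - cE s)) * f s) :=
    (hIcE.add (hIΔC.const_mul κ)).congr (.of_forall fun s => by simp only [Pi.add_apply]; ring)
  rw [deriv_integral_Ioi_add_integral_Iio hIqE hIqC (by fun_prop) (by fun_prop),
    deriv_integral_Ioi_add_integral_Iio hIcE hIcost (by fun_prop) (by fun_prop)]
  calc (qC τ * f τ - qE τ * f τ) / ((cE τ + κ * (cC τ - cE τ)) * f τ - cE τ * f τ)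
      = ((qC τ - qE τ) * f τ) / ((κ * (cC τ - cE τ)) * f τ) := by congr 1 <;> ring
    _ = ((qC τ - qE τ) / (cC τ - cE τ)) / κ := by
      rw [mul_div_mul_right _ _ hfτ.ne', div_div, mul_comm κ]

/-- State-dependent frontier slope.  With network cost scaling `κ > 0`
and state-dependent cost `C_κ(τ) = ∫_τ^∞ cE f + ∫_{−∞}^τ (cE + κ·ΔC) f`, for every `τ`
with `f(τ) > 0` and `ΔC(τ) ≠ 0` one has `Q'(τ) / C_κ'(τ) = ρ(τ) / κ`. -/
theorem stmt_10 (f qE qC cE cC : ℝ → ℝ) (κ : ℝ) (hκ : 0 < κ)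
    (hf : Continuous f) (hf0 : ∀ s, 0 ≤ f s) (hfprob : (∫ s, f s) = 1)
    (hqE : Continuous qE) (hqC : Continuous qC)
    (hcE : Continuous cE) (hcC : Continuous cC)
    (hIqE : Integrable (fun s => qE s * f s))
    (hIqC : Integrable (fun s => qC s * f s))
    (hIcE : Integrable (fun s => cE s * f s))
    (hIcC : Integrable (fun s => cC s * f s))
    (hIΔC : Integrable (fun s => (cC s - cE s) * f s))
    (τ : ℝ) (hfτ : 0 < f τ) (hΔCτ : cC τ - cE τ ≠ 0) :
    deriv (fun τ => (∫ s in Ioi τ, qE s * f s) + ∫ s in Iio τ, qC s * f s) τ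
      / deriv (fun τ => (∫ s in Ioi τ, cE s * f s)
          + ∫ s in Iio τ, (cE s + κ * (cC s - cE s)) * f s) τ
    = ((qC τ - qE τ) / (cC τ - cE τ)) / κ :=
  stmt_10_general f qE qC cE cC κ hf hqE hqC hcE hcC hIqE hIqC hIcE hIΔC τ hfτ
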